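/- Let G be an isostatic graph and let R be any DR-plan of G. Then there exists a DR-plan R' of G in which every child of every internal node is a cluster of that node's labeling subgraph, and the size of R' is at most the size of R. Consequently, some optimal DR-plan of G has the property that every child of every internal node is a cluster of the parent. -/

import Mathlib

/-- A finite combinatorial graph: a finite vertex set and a finite set of edges,
each edge an unordered pair of distinct vertices whose endpoints lie in the vertex set. -/
structure CGraph (α : Type) [DecidableEq α] where
  verts : Finset α
  edges : Finset (Sym2 α)
  not_diag : ∀ e ∈ edges, ¬ e.IsDiag
  endpoints_mem : ∀ e ∈ edges, ∀ v ∈ e, v ∈ verts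

namespace CGraph

variable {α : Type} [DecidableEq α]

/-- Subgraph relation (componentwise containment). -/
def IsSubgraph (H G : CGraph α) : Prop :=
  H.verts ⊆ G.verts ∧ H.edges ⊆ G.edges

/-- Componentwise union of two graphs. -/
def union (G H : CGraph α) : CGraph α where
  verts := G.verts ∪ H.verts
  edges := G.edges ∪ H.edges
  not_diag := by
    intro e he
    rcases Finset.mem_union.1 he with h | h
    · exact G.not_diag e h
    · exact H.not_diag e h
  endpoints_mem := by
    intro e he v hv
    rcases Finset.mem_union.1 he with h | h
    · exact Finset.mem_union_left _ (G.endpoints_mem e h v hv)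
    · exact Finset.mem_union_right _ (H.endpoints_mem e h v hv)

/-- Componentwise intersection of two graphs. -/
def inter (G H : CGraph α) : CGraph α where
  verts := G.verts ∩ H.verts
  edges := G.edges ∩ H.edges
  not_diag := fun e he => G.not_diag e (Finset.mem_inter.1 he).1
  endpoints_mem := fun e he v hv => Finset.mem_inter.2
    ⟨G.endpoints_mem e (Finset.mem_inter.1 he).1 v hv,
     H.endpoints_mem e (Finset.mem_inter.1 he).2 v hv⟩

/-- The empty graph. -/
def empty : CGraph α := ⟨∅, ∅, by simp, by simp⟩

/-- Union of a list of graphs. -/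
def listUnion : List (CGraph α) → CGraph α
  | [] => empty
  | g :: gs => g.union (listUnion gs)

/-- A graph is trivial if it has at most one vertex. -/
def Trivial (G : CGraph α) : Prop := G.verts.card ≤ 1

/-- (2,3)-sparsity: every subgraph on at least 2 vertices has at most `2|V'| - 3` edges
(stated additively to avoid truncated subtraction). -/
def Sparse23 (G : CGraph α) : Prop :=
  ∀ H : CGraph α, H.IsSubgraph G → 2 ≤ H.verts.card →
    H.edges.card + 3 ≤ 2 * H.verts.card

/-- Isostatic (Laman-tight): (2,3)-sparse with `|E| = 2|V| - 3`. -/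
def Isostatic (G : CGraph α) : Prop :=
  G.Sparse23 ∧ G.edges.card + 3 = 2 * G.verts.card

/-- Underconstrained: (2,3)-sparse, at least two vertices, and `|E| < 2|V| - 3`. -/
def Underconstrained (G : CGraph α) : Prop :=
  G.Sparse23 ∧ 2 ≤ G.verts.card ∧ G.edges.card + 3 < 2 * G.verts.card

/-- A graph consisting of a single edge together with its two endpoints. -/
def IsSingleEdge (G : CGraph α) : Prop :=
  ∃ u v : α, u ≠ v ∧ G.verts = {u, v} ∧ G.edges = {s(u, v)}

/-- A cluster of `C`: a proper isostatic subgraph of `C` that is vertex-maximal among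
proper isostatic subgraphs of `C`. -/
def IsCluster (D C : CGraph α) : Prop :=
  D.IsSubgraph C ∧ D ≠ C ∧ D.Isostatic ∧
  ∀ D' : CGraph α, D'.IsSubgraph C → D' ≠ C → D'.Isostatic → ¬ D.verts ⊂ D'.verts

/-- Every pair of distinct clusters of `C` has trivial intersection. -/
def PairwiseTrivialClusters (C : CGraph α) : Prop :=
  ∀ D₁ D₂ : CGraph α, IsCluster D₁ C → IsCluster D₂ C → D₁ ≠ D₂ → (D₁.inter D₂).Trivial

end CGraph

/-- A finite rooted tree whose nodes are labeled by graphs. -/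
inductive DRTree (α : Type) [DecidableEq α] : Type
  | node : CGraph α → List (DRTree α) → DRTree α

namespace DRTree

variable {α : Type} [DecidableEq α]

/-- The label at the root of the tree. -/
def label : DRTree α → CGraph α
  | .node C _ => C

/-- The size of a DR-plan: the maximum fan-in (number of children) over all nodes. -/
def size : DRTree α → ℕ
  | .node _ ts => ts.attach.foldr (fun t acc => max (size t.1) acc) ts.length
decreasing_by
  have := List.sizeOf_lt_of_mem t.2
  simp only [DRTree.node.sizeOf_spec]
  omega

end DRTree

/-- `IsDRPlan t` : the labeled tree `t` is a DR-plan (of its root label): every node is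
labeled by an isostatic graph, every leaf is a single edge, and every internal node
labeled `C` has `N ≥ 2` children, all proper isostatic subgraphs of `C`, whose union
is `C`. -/
inductive IsDRPlan {α : Type} [DecidableEq α] : DRTree α → Prop
  | leaf (C : CGraph α) : C.Isostatic → C.IsSingleEdge → IsDRPlan (.node C [])
  | node (C : CGraph α) (ts : List (DRTree α)) :
      C.Isostatic →
      2 ≤ ts.length →
      (∀ t ∈ ts, (DRTree.label t).IsSubgraph C ∧ DRTree.label t ≠ C ∧
        (DRTree.label t).Isostatic) →
      CGraph.listUnion (ts.map DRTree.label) = C →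
      (∀ t ∈ ts, IsDRPlan t) →
      IsDRPlan (.node C ts)

/-- `t` is a DR-plan of the graph `G`: a DR-plan whose root is labeled `G`. -/
def IsDRPlanOf {α : Type} [DecidableEq α] (t : DRTree α) (G : CGraph α) : Prop :=
  IsDRPlan t ∧ t.label = G

/-- A DR-plan is canonical if at every internal node labeled `C`: all children are
clusters of `C`; if every pair of distinct clusters of `C` intersects trivially then
the children are exactly all the clusters of `C`; and otherwise there are exactly two
children, which are two clusters of `C` with nontrivial intersection. -/
inductive IsCanonical {α : Type} [DecidableEq α] : DRTree α → Prop
  | leaf (C : CGraph α) : IsCanonical (.node C [])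
  | node (C : CGraph α) (ts : List (DRTree α)) :
      ts ≠ [] →
      (∀ t ∈ ts, CGraph.IsCluster (DRTree.label t) C) →
      (C.PairwiseTrivialClusters →
        ∀ D : CGraph α, CGraph.IsCluster D C ↔ ∃ t ∈ ts, DRTree.label t = D) →
      (¬ C.PairwiseTrivialClusters →
        ∃ t₁ t₂ : DRTree α, ts = [t₁, t₂] ∧ DRTree.label t₁ ≠ DRTree.label t₂ ∧
          ¬ ((DRTree.label t₁).inter (DRTree.label t₂)).Trivial) →
      (∀ t ∈ ts, IsCanonical t) →
      IsCanonical (.node C ts)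

/-- In the tree, every child of every node is a cluster of that node's label. -/
inductive ClusterChildren {α : Type} [DecidableEq α] : DRTree α → Prop
  | node (C : CGraph α) (ts : List (DRTree α)) :
      (∀ t ∈ ts, CGraph.IsCluster (DRTree.label t) C) →
      (∀ t ∈ ts, ClusterChildren t) →
      ClusterChildren (.node C ts)

/-!
Replace every child of a node by a cluster of the node containing it. A DR-plan restricts to any
isostatic subgraph `D` of its root without increasing its size: descend into a child containing `D`
if there is one, and otherwise use the intersections of `D` with the children, since two isostatic
subgraphs of a (2,3)-sparse graph sharing two vertices meet in an isostatic graph. Restricting the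
plan to each chosen cluster and recursing (clusters have fewer vertices) yields a plan with cluster
children and no larger size; starting from an optimal plan, the result is optimal too.
-/

namespace CGraph

variable {α : Type} [DecidableEq α]

@[ext]
theorem ext {G H : CGraph α} (hv : G.verts = H.verts) (he : G.edges = H.edges) : G = H := by
  cases G; cases H; simp_all

theorem IsSubgraph.refl (G : CGraph α) : G.IsSubgraph G := ⟨subset_rfl, subset_rfl⟩

theorem IsSubgraph.trans {G H K : CGraph α} (h₁ : G.IsSubgraph H) (h₂ : H.IsSubgraph K) :
    G.IsSubgraph K := ⟨h₁.1.trans h₂.1, h₁.2.trans h₂.2⟩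

theorem Sparse23.mono {G H : CGraph α} (hG : G.Sparse23) (h : H.IsSubgraph G) : H.Sparse23 :=
  fun K hK => hG K (hK.trans h)

theorem inter_isSubgraph_left (G H : CGraph α) : (G.inter H).IsSubgraph G :=
  ⟨Finset.inter_subset_left, Finset.inter_subset_left⟩

theorem inter_isSubgraph_right (G H : CGraph α) : (G.inter H).IsSubgraph H :=
  ⟨Finset.inter_subset_right, Finset.inter_subset_right⟩

theorem inter_eq_left_iff {G H : CGraph α} : G.inter H = G ↔ G.IsSubgraph H := by
  simp only [CGraph.ext_iff, inter, Finset.inter_eq_left, IsSubgraph]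

theorem two_le_card_verts_of_mem_edges {G : CGraph α} {e : Sym2 α} (he : e ∈ G.edges) :
    2 ≤ G.verts.card := by
  induction e using Sym2.ind with
  | _ u v =>
    have huv : u ≠ v := fun h => G.not_diag _ he (Sym2.mk_isDiag_iff.2 h)
    exact Finset.one_lt_card.2 ⟨u, G.endpoints_mem _ he u (Sym2.mem_mk_left u v),
      v, G.endpoints_mem _ he v (Sym2.mem_mk_right u v), huv⟩

theorem Isostatic.two_le_card {G : CGraph α} (hG : G.Isostatic) : 2 ≤ G.verts.card := by
  have := hG.2; omega

theorem Isostatic.exists_mem_edges_of_mem_verts {G : CGraph α} (hG : G.Isostatic) {v : α}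
    (hv : v ∈ G.verts) : ∃ e ∈ G.edges, v ∈ e := by
  by_contra! h
  let H : CGraph α := ⟨G.verts.erase v, G.edges, G.not_diag, fun e he u hu =>
    Finset.mem_erase.2 ⟨fun huv => h e he (huv ▸ hu), G.endpoints_mem e he u hu⟩⟩
  obtain ⟨e, he⟩ : G.edges.Nonempty := by
    rw [← Finset.card_pos]; have := hG.2; have := hG.two_le_card; omega
  have hH := hG.1 H ⟨Finset.erase_subset _ _, subset_rfl⟩
    (two_le_card_verts_of_mem_edges (G := H) he)
  have := Finset.card_erase_of_mem hv
  have := hG.2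
  simp only [H] at hH
  omega

theorem Isostatic.eq_of_isSubgraph_of_card_verts_le {D C : CGraph α} (hD : D.Isostatic)
    (hC : C.Isostatic) (hsub : D.IsSubgraph C) (h : C.verts.card ≤ D.verts.card) : D = C := by
  have hv : D.verts = C.verts := Finset.eq_of_subset_of_card_le hsub.1 h
  refine CGraph.ext hv (Finset.eq_of_subset_of_card_le hsub.2 ?_)
  have := hC.2; have := hD.2; rw [hv] at *; omega

theorem Isostatic.card_verts_lt {D C : CGraph α} (hD : D.Isostatic) (hC : C.Isostatic)
    (hsub : D.IsSubgraph C) (hne : D ≠ C) : D.verts.card < C.verts.card :=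
  lt_of_not_ge fun h => hne (hD.eq_of_isSubgraph_of_card_verts_le hC hsub h)

theorem Isostatic.mem_edges_of_endpoints_mem {C D : CGraph α} (hC : C.Sparse23)
    (hD : D.Isostatic) (hsub : D.IsSubgraph C) {e : Sym2 α} (he : e ∈ C.edges)
    (hend : ∀ v ∈ e, v ∈ D.verts) : e ∈ D.edges := by
  classical
  let F := C.edges.filter fun e => ∀ v ∈ e, v ∈ D.verts
  let H : CGraph α := ⟨D.verts, F, fun e' he' => C.not_diag e' (Finset.mem_filter.1 he').1,
    fun e' he' => (Finset.mem_filter.1 he').2⟩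
  have hDF : D.edges ⊆ F := fun e' he' =>
    Finset.mem_filter.2 ⟨hsub.2 he', D.endpoints_mem e' he'⟩
  have hF : F.card + 3 ≤ 2 * D.verts.card :=
    hC H ⟨hsub.1, Finset.filter_subset _ _⟩ hD.two_le_card
  have hFD : F = D.edges := (Finset.eq_of_subset_of_card_le hDF (by have := hD.2; omega)).symm
  exact hFD ▸ Finset.mem_filter.2 ⟨he, hend⟩

theorem Isostatic.isSubgraph_of_verts_subset {C D₁ D₂ : CGraph α} (hC : C.Sparse23)
    (h₂ : D₂.Isostatic) (hs₁ : D₁.IsSubgraph C) (hs₂ : D₂.IsSubgraph C)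
    (hv : D₁.verts ⊆ D₂.verts) : D₁.IsSubgraph D₂ :=
  ⟨hv, fun e he => h₂.mem_edges_of_endpoints_mem hC hs₂ (hs₁.2 he)
    fun v hve => hv (D₁.endpoints_mem e he v hve)⟩

/-- The counting behind it: `|E(D₁ ∪ D₂)| + |E(D₁ ∩ D₂)| = |E(D₁)| + |E(D₂)|`, the same for
vertices, and sparsity bounds both the union and the intersection. -/
theorem Isostatic.inter {C D₁ D₂ : CGraph α} (hC : C.Sparse23)
    (h₁ : D₁.Isostatic) (h₂ : D₂.Isostatic) (hs₁ : D₁.IsSubgraph C) (hs₂ : D₂.IsSubgraph C)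
    (hcard : 2 ≤ (D₁.verts ∩ D₂.verts).card) : (D₁.inter D₂).Isostatic := by
  have hsubI : (D₁.inter D₂).IsSubgraph C := (inter_isSubgraph_left D₁ D₂).trans hs₁
  have hsubU : (D₁.union D₂).IsSubgraph C :=
    ⟨Finset.union_subset hs₁.1 hs₂.1, Finset.union_subset hs₁.2 hs₂.2⟩
  have hI := hC _ hsubI hcard
  have hU := hC _ hsubU (h₁.two_le_card.trans (Finset.card_le_card Finset.subset_union_left))
  have he := Finset.card_union_add_card_inter D₁.edges D₂.edges
  have hv := Finset.card_union_add_card_inter D₁.verts D₂.verts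
  have := h₁.2
  have := h₂.2
  refine ⟨hC.mono hsubI, ?_⟩
  simp only [CGraph.inter, CGraph.union] at *
  omega

theorem Isostatic.exists_isCluster {C K : CGraph α} (hC : C.Isostatic) (hK : K.Isostatic)
    (hsub : K.IsSubgraph C) (hne : K ≠ C) : ∃ D, IsCluster D C ∧ K.IsSubgraph D := by
  let S : Set (CGraph α) := {D | D.IsSubgraph C ∧ D ≠ C ∧ D.Isostatic ∧ K.IsSubgraph D}
  obtain ⟨D, ⟨hDC, hDne, hD, hKD⟩, hmax⟩ :=
    (measure fun D : CGraph α => C.verts.card - D.verts.card).wf.has_min S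
      ⟨K, hsub, hne, hK, IsSubgraph.refl K⟩
  refine ⟨D, ⟨hDC, hDne, hD, fun D' hD'C hD'ne hD' hlt => ?_⟩, hKD⟩
  have hD'S : D' ∈ S :=
    ⟨hD'C, hD'ne, hD', hKD.trans (hD'.isSubgraph_of_verts_subset hC.1 hDC hD'C hlt.subset)⟩
  have := Finset.card_lt_card hlt
  have := hD'.card_verts_lt hC hD'C hD'ne
  exact hmax D' hD'S (show C.verts.card - D'.verts.card < C.verts.card - D.verts.card by omega)

theorem mem_listUnion_verts {l : List (CGraph α)} {v : α} :
    v ∈ (listUnion l).verts ↔ ∃ g ∈ l, v ∈ g.verts := by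
  induction l with
  | nil => simp [listUnion, empty]
  | cons g gs ih => simp [listUnion, union, ih]

theorem mem_listUnion_edges {l : List (CGraph α)} {e : Sym2 α} :
    e ∈ (listUnion l).edges ↔ ∃ g ∈ l, e ∈ g.edges := by
  induction l with
  | nil => simp [listUnion, empty]
  | cons g gs ih => simp [listUnion, union, ih]

theorem listUnion_eq_of_edges_subset {l : List (CGraph α)} {D : CGraph α}
    (hD : ∀ v ∈ D.verts, ∃ e ∈ D.edges, v ∈ e) (hsub : ∀ g ∈ l, g.IsSubgraph D)
    (hcover : ∀ e ∈ D.edges, ∃ g ∈ l, e ∈ g.edges) : listUnion l = D := by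
  ext x
  · refine ⟨fun hx => ?_, fun hx => ?_⟩
    · obtain ⟨g, hg, hxg⟩ := mem_listUnion_verts.1 hx
      exact (hsub g hg).1 hxg
    · obtain ⟨e, he, hxe⟩ := hD x hx
      obtain ⟨g, hg, heg⟩ := hcover e he
      exact mem_listUnion_verts.2 ⟨g, hg, g.endpoints_mem e heg x hxe⟩
  · refine ⟨fun hx => ?_, fun hx => mem_listUnion_edges.2 (hcover x hx)⟩
    obtain ⟨g, hg, hxg⟩ := mem_listUnion_edges.1 hx
    exact (hsub g hg).2 hxg

theorem two_le_length_of_listUnion_eq {l : List (CGraph α)} {D : CGraph α}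
    (hl : listUnion l = D) (hD : D.verts.Nonempty) (hne : ∀ g ∈ l, g ≠ D) : 2 ≤ l.length := by
  match l with
  | [] => simp [← hl, listUnion, empty] at hD
  | [g] => exact absurd (by simpa [listUnion, union, empty] using hl) (hne g (by simp))
  | _ :: _ :: _ => simp

end CGraph

theorem List.exists_list_of_forall_exists {β γ : Type*} {R : β → γ → Prop} (l : List β)
    (h : ∀ x ∈ l, ∃ y, R x y) :
    ∃ l' : List γ, l'.length = l.length ∧ (∀ x ∈ l, ∃ y ∈ l', R x y) ∧
      ∀ y ∈ l', ∃ x ∈ l, R x y := by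
  choose f hf using h
  refine ⟨l.attach.map fun x => f x.1 x.2, by simp, fun x hx => ⟨f x hx, ?_, hf x hx⟩, ?_⟩
  · exact List.mem_map.2 ⟨⟨x, hx⟩, List.mem_attach _ _, rfl⟩
  · simp only [List.mem_map, List.mem_attach, true_and, Subtype.exists]
    rintro _ ⟨x, hx, rfl⟩
    exact ⟨x, hx, hf x hx⟩

theorem List.foldr_max_le_iff {β : Type*} (f : β → ℕ) (b m : ℕ) (l : List β) :
    l.foldr (fun x acc => max (f x) acc) b ≤ m ↔ b ≤ m ∧ ∀ x ∈ l, f x ≤ m := by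
  induction l with
  | nil => simp
  | cons x xs ih => simp only [List.foldr_cons, max_le_iff, ih, List.forall_mem_cons]; tauto

namespace DRTree

variable {α : Type} [DecidableEq α]

theorem size_node_le_iff {C : CGraph α} {ts : List (DRTree α)} {m : ℕ} :
    (node C ts).size ≤ m ↔ ts.length ≤ m ∧ ∀ t ∈ ts, t.size ≤ m := by
  rw [size, List.foldr_max_le_iff]
  simp

theorem length_le_size (C : CGraph α) (ts : List (DRTree α)) : ts.length ≤ (node C ts).size :=
  (size_node_le_iff.1 le_rfl).1

theorem size_le_size_node {C : CGraph α} {ts : List (DRTree α)} {t : DRTree α} (ht : t ∈ ts) :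
    t.size ≤ (node C ts).size :=
  (size_node_le_iff.1 le_rfl).2 t ht

theorem exists_mem_label_edges_of_listUnion_eq {C : CGraph α} {ts : List (DRTree α)}
    (hun : CGraph.listUnion (ts.map label) = C) {e : Sym2 α} (he : e ∈ C.edges) :
    ∃ t ∈ ts, e ∈ t.label.edges := by
  have he' : e ∈ (CGraph.listUnion (ts.map label)).edges := hun ▸ he
  simpa [CGraph.mem_listUnion_edges] using he'

end DRTree

namespace IsDRPlan

open CGraph DRTree

variable {α : Type} [DecidableEq α]

theorem label_isostatic {t : DRTree α} (ht : IsDRPlan t) : t.label.Isostatic := by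
  cases ht with
  | leaf _ hC _ => exact hC
  | node _ _ hC _ _ _ _ => exact hC

theorem node_of_edges_subset {D : CGraph α} {ts : List (DRTree α)} (hD : D.Isostatic)
    (hplan : ∀ t ∈ ts, IsDRPlan t) (hsub : ∀ t ∈ ts, t.label.IsSubgraph D)
    (hne : ∀ t ∈ ts, t.label ≠ D) (hcover : ∀ e ∈ D.edges, ∃ t ∈ ts, e ∈ t.label.edges) :
    IsDRPlan (.node D ts) := by
  have hunion : listUnion (ts.map label) = D :=
    listUnion_eq_of_edges_subset (fun _ => hD.exists_mem_edges_of_mem_verts)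
      (by simpa using hsub) (by simpa using hcover)
  have hlen : 2 ≤ ts.length := by
    simpa using two_le_length_of_listUnion_eq hunion
      (Finset.card_pos.1 (by have := hD.two_le_card; omega)) (by simpa using hne)
  exact .node D ts hD hlen (fun t ht => ⟨hsub t ht, hne t ht, (hplan t ht).label_isostatic⟩)
    hunion hplan

theorem restrict {t : DRTree α} (ht : IsDRPlan t) {D : CGraph α} (hD : D.Isostatic)
    (hsub : D.IsSubgraph t.label) : ∃ s, IsDRPlan s ∧ s.label = D ∧ s.size ≤ t.size := by
  induction ht generalizing D with
  | leaf C hC hse =>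
    obtain ⟨u, v, huv, hV, -⟩ := id hse
    have hCcard : C.verts.card = 2 := by simp [hV, huv]
    obtain rfl := hD.eq_of_isSubgraph_of_card_verts_le hC hsub (hCcard ▸ hD.two_le_card)
    exact ⟨_, .leaf D hC hse, rfl, le_rfl⟩
  | node C ts hC hlen hch hun hts ih =>
    by_cases hin : ∃ t ∈ ts, D.IsSubgraph t.label
    · obtain ⟨t, ht, hDt⟩ := hin
      obtain ⟨s, hs, hsD, hsize⟩ := ih t ht hD hDt
      exact ⟨s, hs, hsD, hsize.trans (size_le_size_node ht)⟩
    push Not at hin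
    let good := ts.filter fun t => 2 ≤ (D.verts ∩ t.label.verts).card
    have key : ∀ t ∈ good, ∃ s, IsDRPlan s ∧ s.label = D.inter t.label ∧ s.size ≤ t.size := by
      intro t ht
      obtain ⟨htm, hcard⟩ : t ∈ ts ∧ 2 ≤ (D.verts ∩ t.label.verts).card := by
        simpa [good] using ht
      obtain ⟨htC, -, htiso⟩ := hch t htm
      exact ih t htm (hD.inter hC.1 htiso hsub htC hcard) (inter_isSubgraph_right _ _)
    obtain ⟨ss, hlen_ss, hgood_ss, hss_good⟩ := List.exists_list_of_forall_exists good key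
    have hcover : ∀ e ∈ D.edges, ∃ s ∈ ss, e ∈ s.label.edges := by
      intro e he
      obtain ⟨t, ht, het⟩ := exists_mem_label_edges_of_listUnion_eq hun (hsub.2 he)
      have heI : e ∈ (D.inter t.label).edges := Finset.mem_inter.2 ⟨he, het⟩
      have htg : t ∈ good := by
        simp only [good, List.mem_filter, ht, true_and, decide_eq_true_eq]
        exact two_le_card_verts_of_mem_edges heI
      obtain ⟨s, hs, -, hsl, -⟩ := hgood_ss t htg
      exact ⟨s, hs, hsl ▸ heI⟩
    refine ⟨.node D ss, node_of_edges_subset hD ?_ ?_ ?_ hcover, rfl, ?_⟩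
    · intro s hs
      obtain ⟨_, _, hs', -⟩ := hss_good s hs
      exact hs'
    · intro s hs
      obtain ⟨t, -, -, hsl, -⟩ := hss_good s hs
      exact hsl ▸ inter_isSubgraph_left _ _
    · intro s hs heq
      obtain ⟨t, ht, -, hsl, -⟩ := hss_good s hs
      exact hin t (List.mem_of_mem_filter ht) (inter_eq_left_iff.1 (hsl ▸ heq))
    · refine size_node_le_iff.2 ⟨?_, fun s hs => ?_⟩
      · calc ss.length = good.length := hlen_ss
          _ ≤ ts.length := List.length_filter_le _ _
          _ ≤ (DRTree.node C ts).size := length_le_size C ts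
      · obtain ⟨t, ht, -, -, hsize⟩ := hss_good s hs
        exact hsize.trans (size_le_size_node (List.mem_of_mem_filter ht))

theorem exists_clusterChildren {t : DRTree α} (ht : IsDRPlan t) :
    ∃ s, IsDRPlan s ∧ s.label = t.label ∧ ClusterChildren s ∧ s.size ≤ t.size := by
  induction hn : t.label.verts.card using Nat.strong_induction_on generalizing t with
  | _ n ih =>
  cases ht with
  | leaf C hC hse => exact ⟨_, .leaf C hC hse, rfl, .node C [] (by simp) (by simp), le_rfl⟩
  | node C ts hC hlen hch hun hts =>
    have key : ∀ t ∈ ts, ∃ s, IsDRPlan s ∧ IsCluster s.label C ∧ t.label.IsSubgraph s.label ∧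
        ClusterChildren s ∧ s.size ≤ (DRTree.node C ts).size := by
      intro t ht
      obtain ⟨htC, htne, htiso⟩ := hch t ht
      obtain ⟨E, hE, htE⟩ := hC.exists_isCluster htiso htC htne
      obtain ⟨p, hp, hpE, hpsize⟩ :=
        (IsDRPlan.node C ts hC hlen hch hun hts).restrict hE.2.2.1 hE.1
      have hcard : p.label.verts.card < n := hn ▸ hpE ▸ hE.2.2.1.card_verts_lt hC hE.1 hE.2.1
      obtain ⟨s, hs, hsp, hscc, hssize⟩ := ih _ hcard hp rfl
      exact ⟨s, hs, hsp ▸ hpE ▸ hE, hsp ▸ hpE ▸ htE, hscc, hssize.trans hpsize⟩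
    obtain ⟨ss, hlen_ss, hts_ss, hss_ts⟩ := List.exists_list_of_forall_exists ts key
    have hcover : ∀ e ∈ C.edges, ∃ s ∈ ss, e ∈ s.label.edges := by
      intro e he
      obtain ⟨t, ht, het⟩ := exists_mem_label_edges_of_listUnion_eq hun he
      obtain ⟨s, hs, -, -, hts, -⟩ := hts_ss t ht
      exact ⟨s, hs, hts.2 het⟩
    have hcluster : ∀ s ∈ ss, IsCluster s.label C := fun s hs => by
      obtain ⟨_, _, -, hsC, -⟩ := hss_ts s hs
      exact hsC
    refine ⟨.node C ss, node_of_edges_subset hC ?_ (fun s hs => (hcluster s hs).1)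
      (fun s hs => (hcluster s hs).2.1) hcover, rfl, .node C ss hcluster ?_, ?_⟩
    · intro s hs
      obtain ⟨_, _, hs', -⟩ := hss_ts s hs
      exact hs'
    · intro s hs
      obtain ⟨_, _, -, -, -, hscc, -⟩ := hss_ts s hs
      exact hscc
    · refine size_node_le_iff.2 ⟨hlen_ss ▸ length_le_size C ts, fun s hs => ?_⟩
      obtain ⟨_, _, -, -, -, -, hsize⟩ := hss_ts s hs
      exact hsize

end IsDRPlan

theorem IsDRPlanOf.exists_clusterChildren {α : Type} [DecidableEq α] {t : DRTree α}
    {G : CGraph α} (ht : IsDRPlanOf t G) :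
    ∃ s, IsDRPlanOf s G ∧ ClusterChildren s ∧ s.size ≤ t.size := by
  obtain ⟨s, hs, hsl, hcc, hsize⟩ := ht.1.exists_clusterChildren
  exact ⟨s, ⟨hs, hsl.trans ht.2⟩, hcc, hsize⟩

theorem drplan_to_cluster_children_general
    {α : Type} [DecidableEq α] (G : CGraph α)
    (R : DRTree α) (hR : IsDRPlanOf R G) :
    (∃ R' : DRTree α, IsDRPlanOf R' G ∧ ClusterChildren R' ∧ R'.size ≤ R.size) ∧
    (∃ R'' : DRTree α, IsDRPlanOf R'' G ∧ ClusterChildren R'' ∧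
      ∀ R''' : DRTree α, IsDRPlanOf R''' G → R''.size ≤ R'''.size) := by
  refine ⟨hR.exists_clusterChildren, ?_⟩
  obtain ⟨R₀, hR₀, hmin⟩ :=
    (measure (DRTree.size (α := α))).wf.has_min {t | IsDRPlanOf t G} ⟨R, hR⟩
  obtain ⟨R'', hR'', hcc, hsize⟩ := IsDRPlanOf.exists_clusterChildren hR₀
  exact ⟨R'', hR'', hcc, fun R''' hR''' => hsize.trans (not_lt.1 (hmin R''' hR'''))⟩

/-- from any DR-plan `R` of an isostatic graph `G` one can obtain a
DR-plan `R'` of `G` of size at most that of `R` in which every child of every internal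
node is a cluster of that node's label; consequently some optimal DR-plan of `G` has
this property. -/
theorem drplan_to_cluster_children
    {α : Type} [DecidableEq α] (G : CGraph α) (hG : G.Isostatic)
    (R : DRTree α) (hR : IsDRPlanOf R G) :
    (∃ R' : DRTree α, IsDRPlanOf R' G ∧ ClusterChildren R' ∧ R'.size ≤ R.size) ∧
    (∃ R'' : DRTree α, IsDRPlanOf R'' G ∧ ClusterChildren R'' ∧
      ∀ R''' : DRTree α, IsDRPlanOf R''' G → R''.size ≤ R'''.size) :=
  drplan_to_cluster_children_general G R hR
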